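/- arXiv:1707.06631 — 5 statements merged into one kernel-verified Lean document; each statement's English description precedes it below -/
import Mathlib

section
/- Let A ∈ ℤ^{n×m} have full row rank, b ∈ ℤⁿ, and let γ_A = gcd of the nonzero entries of A. Let D be the maximum absolute value of determinants of square submatrices of A/γ_A of dimension n−1 or n. Then for any basic feasible solution f of {Af = b, f ≥ 0}, we have ‖f‖_∞ ≤ D·‖b/γ_A‖₁, and moreover f_j ≠ 0 implies |f_j| ≥ 1/(D·γ_A). -/
/-!
Choose columns `r` of `A` forming a basis of `ℝⁿ` and containing the support of `f`, and let
`B = A_r / γ`, an integer matrix with `B (f ∘ r) = b / γ`. Cramer's rule reads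
`det B • (f ∘ r) = adj B (b / γ)`. The entries of `adj B` are `(n-1)`-minors of `A / γ`, hence
at most `D`, and `|det B| ≥ 1` because it is a nonzero integer: this gives the upper bound.
For the lower bound, `γ det B f (r k) = (adj B b) k` is a nonzero integer and `|det B| ≤ D`.
-/

open Matrix

theorem Finset.gcd_filter_ne_zero_dvd {α β : Type*} [CommMonoidWithZero α]
    [NormalizedGCDMonoid α] {s : Finset β} {f : β → α} [DecidablePred fun x : β ↦ f x = 0]
    {b : β} (hb : b ∈ s) : {x ∈ s | f x ≠ 0}.gcd f ∣ f b := by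
  rw [← gcd_eq_gcd_filter_ne_zero]
  exact gcd_dvd hb

theorem exists_fin_linearIndependent_extension
    {K V ι : Type*} [Field K] [AddCommGroup V] [Module K V] [FiniteDimensional K V]
    {n : ℕ} (hn : Module.finrank K V = n) {v : ι → V}
    (hspan : Submodule.span K (Set.range v) = ⊤) {s : Set ι} (hs : LinearIndepOn K v s) :
    ∃ r : Fin n → ι, Function.Injective r ∧ s ⊆ Set.range r ∧ LinearIndependent K (v ∘ r) := by
  obtain ⟨t, -, hst, hspan_t, ht⟩ := exists_linearIndepOn_extension hs (Set.subset_univ s)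
  have hspan_t' : Submodule.span K (Set.range fun x : t => v x) = ⊤ := by
    rw [← Set.image_eq_range, eq_top_iff, ← hspan, Submodule.span_le, ← Set.image_univ]
    exact hspan_t
  let e := (Module.finBasisOfFinrankEq K V hn).indexEquiv (Module.Basis.mk ht hspan_t'.ge)
  refine ⟨Subtype.val ∘ e, Subtype.val_injective.comp e.injective, fun x hx => ?_,
    ht.comp e e.injective⟩
  exact ⟨e.symm ⟨x, hst hx⟩, by simp⟩

theorem Matrix.span_col_eq_top_of_linearIndependent_row {K m ι : Type*} [Field K] [Fintype m]
    [Fintype ι] {A : Matrix m ι K} (hA : LinearIndependent K A.row) :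
    Submodule.span K (Set.range A.col) = ⊤ := by
  apply Submodule.eq_top_of_finrank_eq
  rw [← rank_eq_finrank_span_cols, rank_eq_finrank_span_row, finrank_span_eq_card hA,
    Module.finrank_fintype_fun_eq_card]

theorem Matrix.mulVec_eq_submatrix_mulVec_of_support_subset {R m ι κ : Type*}
    [NonUnitalNonAssocSemiring R] [Fintype ι] [Fintype κ]
    (A : Matrix m ι R) {x : ι → R} {r : κ → ι} (hr : Function.Injective r)
    (hx : Function.support x ⊆ Set.range r) :
    A *ᵥ x = A.submatrix id r *ᵥ (x ∘ r) := by
  ext i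
  refine (Fintype.sum_of_injective r hr _ _ (fun j hj => ?_) (fun _ => rfl)).symm
  have : x j = 0 := by_contra fun h => hj (hx h)
  simp [this]

theorem Matrix.det_ne_zero_of_linearIndependent_col_smul {K n : Type*} [Field K] [Fintype n]
    [DecidableEq n] {M : Matrix n n K} {c : K} (h : LinearIndependent K (c • M).col) :
    M.det ≠ 0 := by
  rw [linearIndependent_cols_iff_isUnit, isUnit_iff_isUnit_det, det_smul, isUnit_iff_ne_zero] at h
  exact right_ne_zero_of_mul h

theorem Matrix.adjugate_mulVec_mulVec {R n : Type*} [CommRing R] [Fintype n] [DecidableEq n]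
    (M : Matrix n n R) (x : n → R) : M.adjugate *ᵥ (M *ᵥ x) = M.det • x := by
  rw [mulVec_mulVec, adjugate_mul, smul_mulVec, one_mulVec]

theorem Matrix.abs_mulVec_apply_le {R m n : Type*} [Ring R] [LinearOrder R] [IsOrderedRing R]
    [Fintype n] {N : Matrix m n R} {D : R} {k : m} (hN : ∀ i, |N k i| ≤ D) (y : n → R) :
    |(N *ᵥ y) k| ≤ D * ∑ i, |y i| := by
  rw [Finset.mul_sum]
  refine (Finset.abs_sum_le_sum_abs _ _).trans (Finset.sum_le_sum fun i _ => ?_)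
  rw [abs_mul]
  exact mul_le_mul_of_nonneg_right (hN i) (abs_nonneg _)

theorem Matrix.abs_adjugate_apply_le {R : Type*} [CommRing R] [LinearOrder R] [IsOrderedRing R]
    {n : ℕ} {B : Matrix (Fin n) (Fin n) R} {D : R}
    (hD : ∀ p q : Fin (n - 1) → Fin n, Function.Injective p → Function.Injective q →
      |(B.submatrix p q).det| ≤ D) (k i : Fin n) :
    |B.adjugate k i| ≤ D := by
  cases n with
  | zero => exact k.elim0
  | succ n =>
    rw [adjugate_fin_succ_eq_det_submatrix, abs_mul, abs_pow, abs_neg, abs_one, one_pow, one_mul]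
    exact hD _ _ (Fin.succAbove_right_injective) (Fin.succAbove_right_injective)

theorem Matrix.abs_le_of_mulVec_eq {R : Type*} [CommRing R] [LinearOrder R] [IsOrderedRing R]
    {n : ℕ} {M : Matrix (Fin n) (Fin n) R} {x y : Fin n → R} (hMxy : M *ᵥ x = y)
    (hdet : 1 ≤ |M.det|) {D : R}
    (hD : ∀ p q : Fin (n - 1) → Fin n, Function.Injective p → Function.Injective q →
      |(M.submatrix p q).det| ≤ D) (k : Fin n) :
    |x k| ≤ D * ∑ i, |y i| :=
  calc |x k| ≤ |M.det| * |x k| := le_mul_of_one_le_left (abs_nonneg _) hdet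
    _ = |(M.adjugate *ᵥ y) k| := by rw [← hMxy, adjugate_mulVec_mulVec, Pi.smul_apply,
      smul_eq_mul, abs_mul]
    _ ≤ D * ∑ i, |y i| := abs_mulVec_apply_le (abs_adjugate_apply_le hD k) y

theorem Matrix.one_le_abs_det_mul_abs_of_mulVec_eq_intCast {R n : Type*} [CommRing R]
    [LinearOrder R] [IsStrictOrderedRing R] [Fintype n] [DecidableEq n] {B : Matrix n n ℤ}
    {x : n → R} {z : n → ℤ} (hBxz : B.map Int.cast *ᵥ x = fun i => (z i : R))
    (hdet : B.det ≠ 0) {k : n} (hx : x k ≠ 0) :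
    1 ≤ |(B.det : R)| * |x k| := by
  have hint : (B.det : R) * x k = ((B.adjugate *ᵥ z) k : ℤ) := by
    have hcast_det : ((B.det : ℤ) : R) = (B.map Int.cast).det := (Int.castRingHom R).map_det B
    have hcast_adj : (B.adjugate.map Int.cast : Matrix n n R) = (B.map Int.cast).adjugate :=
      (Int.castRingHom R).map_adjugate B
    have hcast_mulVec : (((B.adjugate *ᵥ z) k : ℤ) : R) =
        (B.adjugate.map Int.cast *ᵥ fun i => (z i : R)) k :=
      (Int.castRingHom R).map_mulVec _ _ _
    rw [hcast_mulVec, hcast_adj, ← hBxz, adjugate_mulVec_mulVec, hcast_det]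
    rfl
  have hne : (B.adjugate *ᵥ z) k ≠ 0 := by
    have : (B.det : R) * x k ≠ 0 := mul_ne_zero (Int.cast_ne_zero.2 hdet) hx
    exact_mod_cast hint ▸ this
  rw [← abs_mul, hint, ← Int.cast_abs]
  exact_mod_cast Int.one_le_abs hne

theorem Matrix.one_div_mul_le_abs_of_mulVec_eq_intCast_div {K n : Type*} [Field K]
    [LinearOrder K] [IsStrictOrderedRing K] [Fintype n] [DecidableEq n] {B : Matrix n n ℤ}
    {x : n → K} {z : n → ℤ} {c : K} (hc : 0 < c)
    (hBxz : B.map Int.cast *ᵥ x = fun i => (z i : K) / c) (hdet : B.det ≠ 0) {D : K}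
    (hD : |(B.det : K)| ≤ D) {k : n} (hx : x k ≠ 0) :
    1 / (D * c) ≤ |x k| := by
  have hBxz' : B.map Int.cast *ᵥ (c • x) = fun i => (z i : K) := by
    rw [mulVec_smul, hBxz]
    ext i
    exact mul_div_cancel₀ _ hc.ne'
  have hone := one_le_abs_det_mul_abs_of_mulVec_eq_intCast hBxz' hdet (k := k)
    (smul_ne_zero hc.ne' hx)
  rw [Pi.smul_apply, smul_eq_mul, abs_mul, abs_of_pos hc] at hone
  have hdet_one : (1 : K) ≤ |(B.det : K)| := by exact_mod_cast Int.one_le_abs hdet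
  have hDpos : 0 < D := one_pos.trans_le (hdet_one.trans hD)
  rw [div_le_iff₀ (mul_pos hDpos hc)]
  calc 1 ≤ |(B.det : K)| * (c * |x k|) := hone
    _ ≤ D * (c * |x k|) := by gcongr
    _ = |x k| * (D * c) := by ring

theorem bfs_bounds_general {n m : ℕ} (A : Matrix (Fin n) (Fin m) ℤ) (b : Fin n → ℤ)
    (hrank : LinearIndependent ℝ (fun i : Fin n => fun j => (A i j : ℝ)))
    (γ : ℤ)
    (hγ : γ = (Finset.univ.filter (fun p : Fin n × Fin m => A p.1 p.2 ≠ 0)).gcd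
      (fun p => A p.1 p.2))
    (hγpos : 0 < γ)
    (D : ℝ)
    (hD : ∀ (k : ℕ), (k = n - 1 ∨ k = n) →
      ∀ (r : Fin k → Fin n) (s : Fin k → Fin m),
        Function.Injective r → Function.Injective s →
        |Matrix.det (Matrix.of fun i j => (A (r i) (s j) : ℝ) / (γ : ℝ))| ≤ D)
    (f : Fin m → ℝ)
    (hbfs : (Matrix.of fun i j => (A i j : ℝ)).mulVec f = (fun i => (b i : ℝ)) ∧
      0 ≤ f ∧
      LinearIndependent ℝ
        (fun j : {j : Fin m // f j ≠ 0} => fun i => (A i j.1 : ℝ))) :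
    (∀ j, |f j| ≤ D * ∑ i, |(b i : ℝ) / (γ : ℝ)|) ∧
    (∀ j, f j ≠ 0 → 1 / (D * (γ : ℝ)) ≤ |f j|) := by
  obtain ⟨hsys, -, hind⟩ := hbfs
  have hγr : (0 : ℝ) < γ := Int.cast_pos.2 hγpos
  obtain ⟨r, hr, hsupp, hli⟩ := exists_fin_linearIndependent_extension
    (Module.finrank_fin_fun ℝ) (span_col_eq_top_of_linearIndependent_row hrank) hind
  -- `γ` divides every entry of `A`, so the integer division below is exact
  let B : Matrix (Fin n) (Fin n) ℤ := .of fun i k => A i (r k) / γ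
  have hB : B.map (Int.cast : ℤ → ℝ) = .of fun i k => (A i (r k) : ℝ) / γ := by
    ext i k
    exact Int.cast_div (hγ ▸ Finset.gcd_filter_ne_zero_dvd (Finset.mem_univ (i, r k))) hγr.ne'
  have hBsys : B.map Int.cast *ᵥ (f ∘ r) = fun i => (b i : ℝ) / γ := by
    ext i
    rw [hB, ← congrFun hsys i, mulVec_eq_submatrix_mulVec_of_support_subset _ hr hsupp]
    simp only [mulVec, dotProduct, of_apply, submatrix_apply, id, Function.comp_apply,
      Finset.sum_div, div_mul_eq_mul_div]
  have hDB (k : ℕ) (hk : k = n - 1 ∨ k = n) (p q : Fin k → Fin n) (hp : Function.Injective p)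
      (hq : Function.Injective q) : |((B.map Int.cast).submatrix p q).det| ≤ D := by
    rw [hB]
    exact hD k hk p (r ∘ q) hp (hr.comp hq)
  have hdet_cast : (B.det : ℝ) = (B.map Int.cast).det := (Int.castRingHom ℝ).map_det B
  have hdet : B.det ≠ 0 := by
    suffices (B.map Int.cast).det ≠ (0 : ℝ) by exact_mod_cast hdet_cast ▸ this
    refine det_ne_zero_of_linearIndependent_col_smul (c := (γ : ℝ)) ?_
    have hcol : ((γ : ℝ) • B.map Int.cast).col = fun k i => (A i (r k) : ℝ) := by
      ext k i
      simp [hB, mul_div_cancel₀ _ hγr.ne']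
    exact hcol ▸ hli
  have hdet_one : (1 : ℝ) ≤ |(B.det : ℝ)| := by exact_mod_cast Int.one_le_abs hdet
  have hdet_le : |(B.det : ℝ)| ≤ D := by
    simpa [hdet_cast] using hDB n (.inr rfl) id id Function.injective_id Function.injective_id
  refine ⟨fun j => ?_, fun j hj => ?_⟩
  · by_cases hj : f j = 0
    · rw [hj, abs_zero]
      exact mul_nonneg ((abs_nonneg _).trans hdet_le) (Finset.sum_nonneg fun i _ => abs_nonneg _)
    obtain ⟨k, rfl⟩ := hsupp hj
    exact abs_le_of_mulVec_eq hBsys (hdet_cast ▸ hdet_one) (hDB _ (.inl rfl)) k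
  · obtain ⟨k, rfl⟩ := hsupp hj
    exact one_div_mul_le_abs_of_mulVec_eq_intCast_div hγr hBsys hdet hdet_le hj

/-- Bounds on basic feasible solutions of an integral system via the
scale-invariant determinant D and the gcd γ of the entries of A. -/
theorem bfs_bounds {n m : ℕ} (A : Matrix (Fin n) (Fin m) ℤ) (b : Fin n → ℤ)
    (hrank : LinearIndependent ℝ (fun i : Fin n => fun j => (A i j : ℝ)))
    (γ : ℤ)
    (hγ : γ = (Finset.univ.filter (fun p : Fin n × Fin m => A p.1 p.2 ≠ 0)).gcd
      (fun p => A p.1 p.2))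
    (hγpos : 0 < γ)
    (D : ℝ) (hDpos : 0 < D)
    (hD : ∀ (k : ℕ), (k = n - 1 ∨ k = n) →
      ∀ (r : Fin k → Fin n) (s : Fin k → Fin m),
        Function.Injective r → Function.Injective s →
        |Matrix.det (Matrix.of fun i j => (A (r i) (s j) : ℝ) / (γ : ℝ))| ≤ D)
    (f : Fin m → ℝ)
    (hbfs : (Matrix.of fun i j => (A i j : ℝ)).mulVec f = (fun i => (b i : ℝ)) ∧
      0 ≤ f ∧
      LinearIndependent ℝ
        (fun j : {j : Fin m // f j ≠ 0} => fun i => (A i j.1 : ℝ))) :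
    (∀ j, |f j| ≤ D * ∑ i, |(b i : ℝ) / (γ : ℝ)|) ∧
    (∀ j, f j ≠ 0 → 1 / (D * (γ : ℝ)) ≤ |f j|) :=
  bfs_bounds_general A b hrank γ hγ hγpos D hD f hbfs
end

section
/- Let A ∈ ℝ^{n×m}, b ∈ ℝⁿ, c, x ∈ ℝ^m with x > 0 and c ≥ 0, and suppose every nonzero kernel element of A has positive cost cᵀ|z| > 0. Then the minimum energy feasible solution q (the minimizer of Σ_e (c_e/x_e) f_e² subject to Af = b) lies in the convex hull of the basic feasible solutions of {Af = b} sign-compatible with q; in particular, the kernel component in its sign-compatible decomposition is zero. -/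
/-!
Since `q` minimizes the energy `∑ (c/x) f²` on the affine space `q + ker A`, the first-order
condition gives `∑ (c/x) z q = 0` for every `z ∈ ker A`. If `z` is sign-compatible with `q`,
every term is nonnegative, so `c` vanishes on the support of `z`, and the positive-cost
hypothesis forces `z = 0`.

In the absence of sign-compatible kernel directions, a feasible `f` sign-compatible with `q`
whose support columns are dependent carries a kernel vector `z` supported in `supp f`, and
both `z` and `-z` point against `f` in some entry. Moving from `f` along `z` and along `-z`
until an entry vanishes gives two feasible points of smaller support, still sign-compatible
with `q`, whose segment contains `f`; induction on the support size concludes.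
-/

/-- A basic solution of {f : Af = b}: a feasible vector whose support columns
are linearly independent. -/
def IsBasicSol {n m : ℕ} (A : Matrix (Fin n) (Fin m) ℝ) (b : Fin n → ℝ)
    (f : Fin m → ℝ) : Prop :=
  A.mulVec f = b ∧
    LinearIndependent ℝ (fun j : {j : Fin m // f j ≠ 0} => fun i => A i j.1)

open Function Matrix

theorem Matrix.exists_mulVec_eq_zero_support_subset {κ ι R : Type*} [Fintype ι] [CommRing R]
    {A : Matrix κ ι R} {s : Set ι} (h : ¬ LinearIndepOn R A.col s) :
    ∃ z : ι → R, z ≠ 0 ∧ A *ᵥ z = 0 ∧ support z ⊆ s := by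
  simp only [linearIndepOn_iff, not_forall, exists_prop] at h
  obtain ⟨l, hls, hl, hl0⟩ := h
  refine ⟨l, by rwa [Ne, Finsupp.coe_eq_zero], ?_, by simpa [Finsupp.mem_supported] using hls⟩
  rw [← hl, Finsupp.linearCombination_apply, Finsupp.sum_fintype _ _ (by simp)]
  ext i
  simp [Matrix.mulVec, dotProduct, mul_comm]

def SignCompatible {ι : Type*} (g f : ι → ℝ) : Prop :=
  ∀ e, g e ≠ 0 → 0 < g e * f e

namespace SignCompatible

variable {ι : Type*}

theorem refl (f : ι → ℝ) : SignCompatible f f :=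
  fun _ he => mul_self_pos.mpr he

theorem support_subset {g f : ι → ℝ} (h : SignCompatible g f) : support g ⊆ support f :=
  fun e he hfe => by simpa [hfe] using h e he

theorem trans {h g f : ι → ℝ} (hg : SignCompatible h g) (gf : SignCompatible g f) :
    SignCompatible h f := by
  intro e he
  refine pos_of_mul_pos_right (a := g e * g e) ?_ (mul_self_nonneg _)
  convert mul_pos (hg e he) (gf e (hg.support_subset he)) using 1
  ring

theorem mul_nonneg {g f : ι → ℝ} (h : SignCompatible g f) (e : ι) : 0 ≤ g e * f e := by
  by_cases hg : g e = 0
  · simp [hg]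
  · exact (h e hg).le

theorem of_mul_nonneg {g f : ι → ℝ} (hgf : ∀ e, 0 ≤ g e * f e) (hsupp : support g ⊆ support f) :
    SignCompatible g f :=
  fun e he => (hgf e).lt_of_ne (mul_ne_zero he (hsupp he)).symm

end SignCompatible

theorem add_mul_mul_self_nonneg {a b t : ℝ} (ht : 0 ≤ t) (hle : b * a < 0 → t ≤ -a / b) :
    0 ≤ (a + t * b) * a := by
  by_cases hba : b * a < 0
  · have hb : b ≠ 0 := by rintro rfl; simp at hba
    have hdiv : -a / b * (b * a) = -(a * a) := by field_simp
    nlinarith [mul_le_mul_of_nonpos_right (hle hba) hba.le]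
  · nlinarith [mul_nonneg ht (not_lt.mp hba), mul_self_nonneg a]

/-- The ratio test of the simplex method. -/
theorem exists_pos_signCompatible_add_smul_ssubset {ι : Type*} [Fintype ι] {f z : ι → ℝ}
    (hzf : support z ⊆ support f) (hneg : ∃ e, z e * f e < 0) :
    ∃ t : ℝ, 0 < t ∧ SignCompatible (f + t • z) f ∧ support (f + t • z) ⊂ support f := by
  classical
  obtain ⟨e₀, he₀, hmin⟩ := (Finset.univ.filter fun e => z e * f e < 0).exists_min_image
    (fun e => -f e / z e) (by simpa [Finset.Nonempty] using hneg)
  simp only [Finset.mem_filter, Finset.mem_univ, true_and] at he₀ hmin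
  set t := -f e₀ / z e₀
  have hz₀ : z e₀ ≠ 0 := by rintro h; simp [h] at he₀
  have ht : 0 < t := by
    have : t = -(z e₀ * f e₀) / (z e₀ * z e₀) := by simp only [t]; field_simp
    exact this ▸ div_pos (neg_pos.mpr he₀) (mul_self_pos.mpr hz₀)
  have hsupp : support (f + t • z) ⊆ support f :=
    (support_add _ _).trans (Set.union_subset le_rfl ((support_const_smul_subset _ _).trans hzf))
  have hcompat : SignCompatible (f + t • z) f :=
    .of_mul_nonneg (fun e => add_mul_mul_self_nonneg ht.le (hmin e)) hsupp
  refine ⟨t, ht, hcompat, (Set.ssubset_iff_of_subset hsupp).mpr ⟨e₀, ?_, ?_⟩⟩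
  · intro h; simp [h] at he₀
  · simp only [mem_support, not_not, Pi.add_apply, Pi.smul_apply, smul_eq_mul, t]
    field_simp
    ring

theorem mem_segment_add_smul_add_smul_neg {E : Type*} [AddCommGroup E] [Module ℝ E] (f z : E)
    {s t : ℝ} (hs : 0 < s) (ht : 0 < t) : f ∈ segment ℝ (f + s • z) (f + t • -z) := by
  rw [mem_segment_iff_sameRay, sub_add_cancel_left, add_sub_cancel_left, ← smul_neg]
  exact sameRay_smul_smul_of_mul_nonneg (mul_pos hs ht).le

theorem mem_convexHull_basicSol_of_signCompatible {n m : ℕ} {A : Matrix (Fin n) (Fin m) ℝ}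
    {b : Fin n → ℝ} {q : Fin m → ℝ} (hq : ∀ z, A *ᵥ z = 0 → SignCompatible z q → z = 0)
    {f : Fin m → ℝ} (hf : A *ᵥ f = b) (hfq : SignCompatible f q) :
    f ∈ convexHull ℝ {g | IsBasicSol A b g ∧ SignCompatible g q} := by
  induction hk : (support f).ncard using Nat.strong_induction_on generalizing f with
  | _ k ih =>
  by_cases hli : LinearIndepOn ℝ A.col (support f)
  · exact subset_convexHull ℝ _ ⟨⟨hf, hli⟩, hfq⟩
  obtain ⟨z, hz0, hAz, hzf⟩ := exists_mulVec_eq_zero_support_subset hli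
  have hshift : ∀ y, A *ᵥ y = 0 → y ≠ 0 → support y ⊆ support f →
      ∃ t : ℝ, 0 < t ∧ f + t • y ∈ convexHull ℝ {g | IsBasicSol A b g ∧ SignCompatible g q} := by
    intro y hAy hy0 hyf
    have hneg : ∃ e, y e * f e < 0 := by
      by_contra! h
      exact hy0 (hq y hAy ((SignCompatible.of_mul_nonneg h hyf).trans hfq))
    obtain ⟨t, ht, hcompat, hss⟩ := exists_pos_signCompatible_add_smul_ssubset hyf hneg
    refine ⟨t, ht, ih _ (hk ▸ Set.ncard_lt_ncard hss) ?_ (hcompat.trans hfq) rfl⟩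
    rw [mulVec_add, mulVec_smul, hAy, hf, smul_zero, add_zero]
  obtain ⟨s, hs, hfs⟩ := hshift z hAz hz0 hzf
  obtain ⟨t, ht, hft⟩ :=
    hshift (-z) (by rw [mulVec_neg, hAz, neg_zero]) (neg_ne_zero.mpr hz0) (by rwa [support_neg])
  exact (convex_convexHull ℝ _).segment_subset hfs hft
    (mem_segment_add_smul_add_smul_neg f z hs ht)

theorem sum_mul_mul_eq_zero_of_forall_le {ι : Type*} [Fintype ι] {w q z : ι → ℝ}
    (h : ∀ t : ℝ, ∑ e, w e * q e ^ 2 ≤ ∑ e, w e * (q + t • z) e ^ 2) :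
    ∑ e, w e * (z e * q e) = 0 := by
  have hquad : ∀ t : ℝ,
      0 ≤ (∑ e, w e * z e ^ 2) * (t * t) + (2 * ∑ e, w e * (z e * q e)) * t + 0 := by
    intro t
    have expand : ∑ e, w e * (q + t • z) e ^ 2 = ∑ e, w e * q e ^ 2
        + ((∑ e, w e * z e ^ 2) * (t * t) + (2 * ∑ e, w e * (z e * q e)) * t) := by
      simp only [Pi.add_apply, Pi.smul_apply, smul_eq_mul, Finset.mul_sum, Finset.sum_mul,
        ← Finset.sum_add_distrib]
      exact Finset.sum_congr rfl fun e _ => by ring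
    linarith [h t]
  have := discrim_le_zero hquad
  rw [discrim] at this
  nlinarith [sq_nonneg (∑ e, w e * (z e * q e))]

theorem sum_mul_abs_eq_zero_of_signCompatible {ι : Type*} [Fintype ι] {c x q z : ι → ℝ}
    (hc : 0 ≤ c) (hx : ∀ e, 0 < x e) (hzq : SignCompatible z q)
    (horth : ∑ e, c e / x e * (z e * q e) = 0) : ∑ e, c e * |z e| = 0 := by
  have hterm := (Finset.sum_eq_zero_iff_of_nonneg fun e _ =>
    mul_nonneg (div_nonneg (hc e) (hx e).le) (hzq.mul_nonneg e)).mp horth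
  refine Finset.sum_eq_zero fun e he => ?_
  by_cases hz : z e = 0
  · simp [hz]
  · have hcx : c e / x e = 0 := by simpa [(hzq e hz).ne'] using hterm e he
    simp [(div_eq_zero_iff.mp hcx).resolve_right (hx e).ne']

/-- The minimum energy feasible solution is kernel-free: it lies in the convex
hull of the basic feasible solutions sign-compatible with it. -/
theorem min_energy_kernel_free {n m : ℕ} (A : Matrix (Fin n) (Fin m) ℝ)
    (b : Fin n → ℝ) (c x : Fin m → ℝ)
    (hc : 0 ≤ c) (hx : ∀ e, 0 < x e)
    (hker : ∀ z : Fin m → ℝ, A.mulVec z = 0 → z ≠ 0 → 0 < ∑ e, c e * |z e|)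
    (q : Fin m → ℝ) (hq : A.mulVec q = b)
    (hmin : ∀ f : Fin m → ℝ, A.mulVec f = b →
      ∑ e, (c e / x e) * (q e) ^ 2 ≤ ∑ e, (c e / x e) * (f e) ^ 2) :
    q ∈ convexHull ℝ
      {g : Fin m → ℝ | IsBasicSol A b g ∧ ∀ e, g e ≠ 0 → 0 < g e * q e} := by
  refine mem_convexHull_basicSol_of_signCompatible (fun z hAz hzq => ?_) hq (.refl q)
  by_contra hz
  have horth : ∑ e, c e / x e * (z e * q e) = 0 := sum_mul_mul_eq_zero_of_forall_le fun t =>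
    hmin _ (by rw [mulVec_add, mulVec_smul, hAz, hq, smul_zero, add_zero])
  exact (hker z hAz hz).ne' (sum_mul_abs_eq_zero_of_signCompatible hc hx hzq horth)
end

section
/- Let x₁* and x₂* be optimal solutions of the undirected LP min{cᵀx : Af = b, |f| ≤ x} and let f, g be feasible with |f| = x₁* and |g| = x₂*. Then there is no index e such that f_e·g_e < 0 and c_e > 0. -/
/-!
The feasible set `{f | A f = b}` is convex, so the midpoint `h = (f + g) / 2` of the two optimal
flows is feasible. The cost `∑ c_e |h_e|` is at most the average of the two optimal costs, and
strictly less because `|f_e + g_e| < |f_e| + |g_e|` when `f_e g_e < 0` and `c_e > 0`. Since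
each optimal cost is at most the cost of `|h|`, this is a contradiction.
-/

open Finset

theorem abs_add_lt_abs_add_abs_of_mul_neg {α : Type*} [Ring α] [LinearOrder α]
    [IsStrictOrderedRing α] {a b : α} (hab : a * b < 0) : |a + b| < |a| + |b| := by
  refine (abs_add_le a b).lt_of_ne fun heq => hab.not_ge ?_
  rcases (abs_add_eq_add_abs_iff a b).mp heq with ⟨ha, hb⟩ | ⟨ha, hb⟩
  · exact mul_nonneg ha hb
  · exact mul_nonneg_of_nonpos_of_nonpos ha hb

theorem sum_mul_abs_add_lt {ι : Type*} [Fintype ι] {c f g : ι → ℝ} (hc : 0 ≤ c) {e : ι}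
    (hfg : f e * g e < 0) (hce : 0 < c e) :
    ∑ i, c i * |f i + g i| < ∑ i, c i * |f i| + ∑ i, c i * |g i| := by
  rw [← sum_add_distrib]
  refine sum_lt_sum (fun i _ => ?_) ⟨e, mem_univ e, ?_⟩
  · rw [← mul_add]
    exact mul_le_mul_of_nonneg_left (abs_add_le _ _) (hc i)
  · rw [← mul_add]
    exact mul_lt_mul_of_pos_left (abs_add_lt_abs_add_abs_of_mul_neg hfg) hce

theorem Matrix.mulVec_half_add_of_eq {κ ι : Type*} [Fintype ι] (A : Matrix κ ι ℝ)
    {f g : ι → ℝ} {b : κ → ℝ} (hf : A.mulVec f = b) (hg : A.mulVec g = b) :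
    A.mulVec ((2 : ℝ)⁻¹ • (f + g)) = b := by
  rw [Matrix.mulVec_smul, Matrix.mulVec_add, hf, hg, ← two_smul ℝ b, smul_smul,
    inv_mul_cancel₀ two_ne_zero, one_smul]

theorem sum_mul_abs_half_add {ι : Type*} [Fintype ι] (c f g : ι → ℝ) :
    ∑ i, c i * |((2 : ℝ)⁻¹ • (f + g)) i| = 2⁻¹ * ∑ i, c i * |f i + g i| := by
  rw [mul_sum]
  refine sum_congr rfl fun i _ => ?_
  rw [Pi.smul_apply, Pi.add_apply, smul_eq_mul, abs_mul, abs_of_pos (by norm_num)]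
  ring

/-- Two optimal solutions of the undirected LP cannot carry opposite signs on a
coordinate of positive cost. -/
theorem no_sign_conflict {n m : ℕ} (A : Matrix (Fin n) (Fin m) ℝ)
    (b : Fin n → ℝ) (c : Fin m → ℝ) (hc : 0 ≤ c)
    (x₁ x₂ f g : Fin m → ℝ)
    (hf : A.mulVec f = b) (hg : A.mulVec g = b)
    (hfx : ∀ e, |f e| = x₁ e) (hgx : ∀ e, |g e| = x₂ e)
    (hopt₁ : ∀ x' : Fin m → ℝ,
      (∃ f' : Fin m → ℝ, A.mulVec f' = b ∧ ∀ e, |f' e| ≤ x' e) →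
      ∑ e, c e * x₁ e ≤ ∑ e, c e * x' e)
    (hopt₂ : ∀ x' : Fin m → ℝ,
      (∃ f' : Fin m → ℝ, A.mulVec f' = b ∧ ∀ e, |f' e| ≤ x' e) →
      ∑ e, c e * x₂ e ≤ ∑ e, c e * x' e) :
    ¬ ∃ e, f e * g e < 0 ∧ 0 < c e := by
  rintro ⟨e, hfg, hce⟩
  set h := (2 : ℝ)⁻¹ • (f + g)
  have h_feasible : ∃ f' : Fin m → ℝ, A.mulVec f' = b ∧ ∀ e, |f' e| ≤ |h e| :=
    ⟨h, A.mulVec_half_add_of_eq hf hg, fun _ => le_rfl⟩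
  have hle₁ := hopt₁ _ h_feasible
  have hle₂ := hopt₂ _ h_feasible
  have hlt := sum_mul_abs_add_lt hc hfg hce
  simp only [hfx, hgx] at hlt
  rw [sum_mul_abs_half_add] at hle₁ hle₂
  linarith
end

section
/- Let x be an optimal solution to the undirected LP min{cᵀx : ∃f, Af = b, |f| ≤ x} with c ≥ 0, and let f be feasible with |f| = x, where the columns of A are oriented so that f ≥ 0. Then every feasible solution g with supp(g) ⊆ supp(x) satisfies cᵀg = cᵀx. -/
/-- All feasible solutions supported in the support of an optimal solution of
the undirected LP have the same cost as the optimal solution. -/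
theorem optimal_support_cost {n m : ℕ} (A : Matrix (Fin n) (Fin m) ℝ)
    (b : Fin n → ℝ) (c : Fin m → ℝ) (hc : 0 ≤ c)
    (x f : Fin m → ℝ)
    (hf : A.mulVec f = b) (hf0 : 0 ≤ f) (hfx : ∀ e, |f e| = x e)
    (hopt : ∀ x' : Fin m → ℝ,
      (∃ f' : Fin m → ℝ, A.mulVec f' = b ∧ ∀ e, |f' e| ≤ x' e) →
      ∑ e, c e * x e ≤ ∑ e, c e * x' e) :
    ∀ g : Fin m → ℝ, A.mulVec g = b → (∀ e, g e ≠ 0 → x e ≠ 0) →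
      ∑ e, c e * g e = ∑ e, c e * x e := by
  intro g hg hsupp
  have hxf : ∀ e, x e = f e := fun e => (hfx e).symm.trans (abs_of_nonneg (hf0 e))
  set d : Fin m → ℝ := fun e => g e - f e with hd
  -- d vanishes where f vanishes
  have hdf : ∀ e, f e = 0 → d e = 0 := by
    intro e he
    have hx0 : x e = 0 := by rw [hxf e]; exact he
    have : g e = 0 := by
      by_contra h
      exact hsupp e h hx0
    simp [hd, this, he]
  -- A d = 0 in the sense A (f + λ d) = b
  have hAd : ∀ lam : ℝ, A.mulVec (fun e => f e + lam * d e) = b := by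
    intro lam
    have : (fun e => f e + lam * d e) = f + lam • (g - f) := by
      funext e; simp [hd, Pi.add_apply, Pi.smul_apply, smul_eq_mul]
    rw [this, Matrix.mulVec_add, Matrix.mulVec_smul, Matrix.mulVec_sub, hf, hg]
    simp
  -- key: any admissible λ gives 0 ≤ λ * cᵀd
  have key : ∀ lam : ℝ, (∀ e, 0 ≤ f e + lam * d e) → 0 ≤ lam * ∑ e, c e * d e := by
    intro lam hpos
    have h1 := hopt (fun e => f e + lam * d e)
      ⟨fun e => f e + lam * d e, hAd lam, fun e => le_of_eq (abs_of_nonneg (hpos e))⟩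
    have h2 : ∑ e, c e * (f e + lam * d e)
        = ∑ e, c e * f e + lam * ∑ e, c e * d e := by
      rw [Finset.mul_sum, ← Finset.sum_add_distrib]
      congr 1; funext e; ring
    have hxf' : ∑ e, c e * x e = ∑ e, c e * f e := by
      apply Finset.sum_congr rfl; intro e _; rw [hxf e]
    rw [h2, hxf'] at h1
    linarith
  -- choose λ₀ > 0 with λ₀ * |d e| ≤ f e for all e
  have hcd : ∑ e, c e * d e = 0 := by
    by_cases hS : (Finset.univ.filter (fun e => d e ≠ 0)).Nonempty
    · set S := Finset.univ.filter (fun e => d e ≠ 0) with hSdef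
      set lam0 := S.inf' hS (fun e => f e / |d e|) with hlam
      have hfpos : ∀ e ∈ S, 0 < f e := by
        intro e he
        rcases lt_or_eq_of_le (hf0 e) with h | h
        · exact h
        · exfalso
          have := hdf e h.symm
          simp [hSdef, this] at he
      have hlam0pos : 0 < lam0 := by
        rw [hlam]
        apply (Finset.lt_inf'_iff hS).2
        intro e he
        have hde : d e ≠ 0 := by simpa [hSdef] using he
        exact div_pos (hfpos e he) (abs_pos.2 hde)
      have hbound : ∀ e, lam0 * |d e| ≤ f e := by
        intro e
        by_cases hde : d e = 0
        · simp [hde]; exact hf0 e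
        · have heS : e ∈ S := by simp [hSdef, hde]
          have h1 : lam0 ≤ f e / |d e| := Finset.inf'_le _ heS
          have h2 : 0 < |d e| := abs_pos.2 hde
          calc lam0 * |d e| ≤ (f e / |d e|) * |d e| := by
                exact mul_le_mul_of_nonneg_right h1 h2.le
            _ = f e := by field_simp
      have hpos1 : ∀ e, 0 ≤ f e + lam0 * d e := by
        intro e
        have := hbound e
        have h1 : lam0 * d e ≥ -(lam0 * |d e|) := by
          have : d e ≥ -|d e| := neg_abs_le (d e)
          nlinarith [hlam0pos.le]
        linarith
      have hpos2 : ∀ e, 0 ≤ f e + (-lam0) * d e := by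
        intro e
        have := hbound e
        have h1 : (-lam0) * d e ≥ -(lam0 * |d e|) := by
          have : d e ≤ |d e| := le_abs_self (d e)
          nlinarith [hlam0pos.le]
        linarith
      have k1 := key lam0 hpos1
      have k2 := key (-lam0) hpos2
      nlinarith
    · have : ∀ e, d e = 0 := by
        intro e
        by_contra h
        exact hS ⟨e, by simp [h]⟩
      simp [this]
  have : ∑ e, c e * g e = ∑ e, c e * f e + ∑ e, c e * d e := by
    rw [← Finset.sum_add_distrib]
    apply Finset.sum_congr rfl; intro e _; simp [hd]; ring
  rw [this, hcd, add_zero]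
  apply Finset.sum_congr rfl; intro e _; rw [hxf e]
end

section
/- Let Y be a finite set of vectors in ℝⁿ with bᵀy = −1 for each element's associated y, and define C_d(t) = dᵀx(t) for d = |Aᵀy|. Along any solution of the continuous undirected Physarum dynamics ẋ = |q| − x (with Aq = b), one has Ċ_d ≥ 1 − C_d; consequently C_d(t) ≥ 1 + (C_d(t₀) − 1)·e^{−(t − t₀)} for t ≥ t₀, and in particular if C_d(t₀) ≥ 1 then C_d(t) ≥ 1 for all t ≥ t₀. -/
/-!
Pairing `A q = b` with `y` gives `(Aᵀy)ᵀ q = bᵀy = -1`, so `dᵀ|q| ≥ 1` for `d = |Aᵀy|`.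
Hence `C_d = dᵀx` satisfies `Ċ_d = dᵀ|q| - C_d ≥ 1 - C_d`, and Grönwall's inequality applied
to `1 - C_d` gives the exponential lower bound, whose correction term is nonnegative once
`C_d(t₀) ≥ 1`.
-/

open Matrix Set Real

theorem abs_dotProduct_mulVec_le_sum {ι κ R : Type*} [Fintype ι] [Fintype κ] [Ring R]
    [LinearOrder R] [IsStrictOrderedRing R] (A : Matrix ι κ R) (y : ι → R) (q : κ → R) :
    |y ⬝ᵥ A *ᵥ q| ≤ ∑ e, |(y ᵥ* A) e| * |q e| := by
  rw [dotProduct_mulVec, dotProduct]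
  simpa only [abs_mul] using Finset.abs_sum_le_sum_abs (fun e => (y ᵥ* A) e * q e) Finset.univ

theorem le_add_sub_mul_exp_of_sub_le_deriv {f f' : ℝ → ℝ} {c a b : ℝ}
    (hf : ContinuousOn f (Icc a b)) (hf' : ∀ t ∈ Ico a b, HasDerivWithinAt f (f' t) (Ici t) t)
    (bound : ∀ t ∈ Ico a b, c - f t ≤ f' t) :
    ∀ t ∈ Icc a b, c + (f a - c) * exp (-(t - a)) ≤ f t := by
  intro t ht
  have hgap := le_gronwallBound_of_liminf_deriv_right_le (f := fun s => c - f s)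
    (δ := c - f a) (K := -1) (ε := 0) (continuousOn_const.sub hf)
    (fun s hs _ hr => ((hf' s hs).const_sub c).liminf_right_slope_le hr)
    le_rfl (fun s hs => by linarith [bound s hs]) t ht
  rw [gronwallBound_ε0, neg_one_mul] at hgap
  linarith

/-- Along the continuous undirected Physarum dynamics ẋ = |q| − x, for any y
with bᵀy = −1 and d = |Aᵀy|, the quantity C_d(t) = dᵀx(t) satisfies
Ċ_d ≥ 1 − C_d, the Grönwall consequence
C_d(t) ≥ 1 + (C_d(t₀) − 1)e^{−(t−t₀)}, and forward invariance of C_d ≥ 1. -/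
theorem dominating_states_invariant {n m : ℕ} (A : Matrix (Fin n) (Fin m) ℝ)
    (b : Fin n → ℝ) (x q : ℝ → Fin m → ℝ)
    (hq : ∀ t, A.mulVec (q t) = b)
    (hdyn : ∀ (e : Fin m) (t : ℝ),
      HasDerivAt (fun s => x s e) (|q t e| - x t e) t)
    (y : Fin n → ℝ) (hy : (∑ i, b i * y i) = -1) :
    (∀ t : ℝ, 1 - (∑ e, |Matrix.vecMul y A e| * x t e) ≤
      deriv (fun s => ∑ e, |Matrix.vecMul y A e| * x s e) t) ∧
    (∀ t₀ t : ℝ, t₀ ≤ t →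
      1 + ((∑ e, |Matrix.vecMul y A e| * x t₀ e) - 1) * Real.exp (-(t - t₀)) ≤
        ∑ e, |Matrix.vecMul y A e| * x t e) ∧
    (∀ t₀ : ℝ, 1 ≤ (∑ e, |Matrix.vecMul y A e| * x t₀ e) →
      ∀ t, t₀ ≤ t → 1 ≤ ∑ e, |Matrix.vecMul y A e| * x t e) := by
  set C : ℝ → ℝ := fun s => ∑ e, |(y ᵥ* A) e| * x s e
  have hflow (t : ℝ) : 1 ≤ ∑ e, |(y ᵥ* A) e| * |q t e| := by
    have hpair : y ⬝ᵥ A *ᵥ q t = -1 := by rw [hq t, dotProduct_comm]; exact hy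
    simpa [hpair] using abs_dotProduct_mulVec_le_sum A y (q t)
  have hderiv (t : ℝ) : HasDerivAt C (∑ e, |(y ᵥ* A) e| * |q t e| - C t) t := by
    simpa only [mul_sub, Finset.sum_sub_distrib] using
      HasDerivAt.fun_sum fun e _ => (hdyn e t).const_mul |(y ᵥ* A) e|
  have hslope (t : ℝ) : 1 - C t ≤ ∑ e, |(y ᵥ* A) e| * |q t e| - C t := by linarith [hflow t]
  have hgronwall (t₀ t : ℝ) (ht : t₀ ≤ t) : 1 + (C t₀ - 1) * exp (-(t - t₀)) ≤ C t :=
    le_add_sub_mul_exp_of_sub_le_deriv (fun s _ => (hderiv s).continuousAt.continuousWithinAt)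
      (fun s _ => (hderiv s).hasDerivWithinAt) (fun s _ => hslope s) t ⟨ht, le_rfl⟩
  refine ⟨fun t => (hderiv t).deriv ▸ hslope t, hgronwall, fun t₀ h₀ t ht => ?_⟩
  have hcorr : 0 ≤ (C t₀ - 1) * exp (-(t - t₀)) := mul_nonneg (by linarith) (exp_pos _).le
  linarith [hgronwall t₀ t ht]
end
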